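/- Let (A, X, ψ) be a cowreath in a monoidal category C such that (X, ψ) is a coseparable coalgebra in T_A^#. Then the forgetful functor F : C(ψ)_A^X → C_A is separable, and consequently: every morphism of entwined modules that has a section (respectively, retraction) as a morphism of right A-modules already has a section (respectively, retraction) as a morphism of entwined modules. -/

import Mathlib

/-! For a Casimir morphism `B`, sending an `A`-linear `g : M → N` between entwined modules to
`m ↦ g(m₀)₀ · B(g(m₀)₁, m₁)` produces a morphism of entwined modules: `A`-linearity comes from
`B` being a morphism in `T_A^#`, colinearity from the Casimir condition, and the normalisation
`m ∘ (A ⊗ B) ∘ δ = ε` makes the construction fix maps that were already entwined. It is natural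
in `M` and `N`, so it is a natural retraction of the forgetful functor on hom-sets; applied to
a one-sided inverse in `C_A` it yields one in `C(ψ)_A^X`. -/

open CategoryTheory MonoidalCategory

/-- A cowreath `(A, X, ψ)` in `C`: `(X, ψ)` is a coalgebra in the Eilenberg–Moore category
`T_A^#`, with comultiplication `δ : X ⟶ A ⊗ X ⊗ X` and counit `ε : X ⟶ A` satisfying
the axioms (a)–(e) of Section 2.2 of the paper. -/
structure Cowreath {C : Type*} [CategoryTheory.Category C]
    [CategoryTheory.MonoidalCategory C] (A : Mon C) where
  X : C
  ψ : X ⊗ A.X ⟶ A.X ⊗ X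
  ψ_mul : (X ◁ MonObj.mul (X := A.X)) ≫ ψ =
    (α_ X A.X A.X).inv ≫ (ψ ▷ A.X) ≫ (α_ A.X X A.X).hom ≫ (A.X ◁ ψ) ≫
      (α_ A.X A.X X).inv ≫ (MonObj.mul (X := A.X) ▷ X)
  ψ_one : (X ◁ MonObj.one (X := A.X)) ≫ ψ = (ρ_ X).hom ≫ (λ_ X).inv ≫ (MonObj.one (X := A.X) ▷ X)
  δ : X ⟶ A.X ⊗ (X ⊗ X)
  ε : X ⟶ A.X
  /-- (a): `δ` is a morphism `X → X ⊗ X` in `T_A^#`. -/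
  δ_compat : (δ ▷ A.X) ≫ (α_ A.X (X ⊗ X) A.X).hom ≫ (A.X ◁ (α_ X X A.X).hom) ≫
      (A.X ◁ (X ◁ ψ)) ≫ (A.X ◁ (α_ X A.X X).inv) ≫ (A.X ◁ (ψ ▷ X)) ≫
      (A.X ◁ (α_ A.X X X).hom) ≫ (α_ A.X A.X (X ⊗ X)).inv ≫ (MonObj.mul (X := A.X) ▷ (X ⊗ X)) =
    ψ ≫ (A.X ◁ δ) ≫ (α_ A.X A.X (X ⊗ X)).inv ≫ (MonObj.mul (X := A.X) ▷ (X ⊗ X))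
  /-- (b): coassociativity of `δ`. -/
  δ_coassoc : δ ≫ (A.X ◁ (δ ▷ X)) ≫ (A.X ◁ (α_ A.X (X ⊗ X) X).hom) ≫
      (α_ A.X A.X ((X ⊗ X) ⊗ X)).inv ≫ (MonObj.mul (X := A.X) ▷ ((X ⊗ X) ⊗ X)) ≫
      (A.X ◁ (α_ X X X).hom) =
    δ ≫ (A.X ◁ (X ◁ δ)) ≫ (A.X ◁ (α_ X A.X (X ⊗ X)).inv) ≫
      (A.X ◁ (ψ ▷ (X ⊗ X))) ≫ (A.X ◁ (α_ A.X X (X ⊗ X)).hom) ≫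
      (α_ A.X A.X (X ⊗ (X ⊗ X))).inv ≫ (MonObj.mul (X := A.X) ▷ (X ⊗ (X ⊗ X)))
  /-- (c): `ε` is a morphism `X → 𝟙` in `T_A^#`. -/
  ε_compat : ψ ≫ (A.X ◁ ε) ≫ MonObj.mul (X := A.X) = (ε ▷ A.X) ≫ MonObj.mul (X := A.X)
  /-- (d): left counit axiom. -/
  counit_left : δ ≫ (A.X ◁ (ε ▷ X)) ≫ (α_ A.X A.X X).inv ≫ (MonObj.mul (X := A.X) ▷ X) =
    (λ_ X).inv ≫ (MonObj.one (X := A.X) ▷ X)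
  /-- (e): right counit axiom. -/
  counit_right : δ ≫ (A.X ◁ (X ◁ ε)) ≫ (A.X ◁ ψ) ≫ (α_ A.X A.X X).inv ≫
      (MonObj.mul (X := A.X) ▷ X) = (λ_ X).inv ≫ (MonObj.one (X := A.X) ▷ X)
variable {C : Type*} [CategoryTheory.Category C] [CategoryTheory.MonoidalCategory C]

open CategoryTheory MonoidalCategory

/-- The category of right `A`-modules in `C`. -/
structure RMod (A : Mon C) where
  carrier : C
  act : carrier ⊗ A.X ⟶ carrier
  act_one : (carrier ◁ MonObj.one (X := A.X)) ≫ act = (ρ_ carrier).hom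
  act_mul : (α_ carrier A.X A.X).inv ≫ (act ▷ A.X) ≫ act = (carrier ◁ MonObj.mul (X := A.X)) ≫ act

@[ext]
structure RModHom {A : Mon C} (M N : RMod A) where
  hom : M.carrier ⟶ N.carrier
  linear : M.act ≫ hom = (hom ▷ A.X) ≫ N.act

instance {A : Mon C} : Category (RMod A) where
  Hom := RModHom
  id M := ⟨𝟙 M.carrier, by simp⟩
  comp f g := ⟨f.hom ≫ g.hom, by
    rw [← Category.assoc, f.linear, Category.assoc, g.linear, ← Category.assoc,
      ← MonoidalCategory.comp_whiskerRight]⟩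
  id_comp f := by apply RModHom.ext; simp
  comp_id f := by apply RModHom.ext; simp
  assoc f g h := by apply RModHom.ext; simp

@[simp] lemma RMod_id_hom {A : Mon C} (M : RMod A) :
    RModHom.hom (𝟙 M) = 𝟙 M.carrier := rfl

@[simp] lemma RMod_comp_hom {A : Mon C} {M N K : RMod A} (f : M ⟶ N) (g : N ⟶ K) :
    RModHom.hom (f ≫ g) = f.hom ≫ g.hom := rfl

/-- The regular right `A`-module. -/
def regMod (A : Mon C) : RMod A where
  carrier := A.X
  act := MonObj.mul (X := A.X)
  act_one := MonObj.mul_one A.X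
  act_mul := by rw [MonObj.mul_assoc]; simp

/-- The category of entwined modules in `C` over the cowreath `(A, X, ψ)`. -/
structure Ent (A : Mon C) (W : Cowreath A) where
  carrier : C
  act : carrier ⊗ A.X ⟶ carrier
  act_one : (carrier ◁ MonObj.one (X := A.X)) ≫ act = (ρ_ carrier).hom
  act_mul : (α_ carrier A.X A.X).inv ≫ (act ▷ A.X) ≫ act = (carrier ◁ MonObj.mul (X := A.X)) ≫ act
  coact : carrier ⟶ carrier ⊗ W.X
  /-- the coaction is right `A`-linear -/
  coact_linear : act ≫ coact =
    (coact ▷ A.X) ≫ (α_ carrier W.X A.X).hom ≫ (carrier ◁ W.ψ) ≫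
      (α_ carrier A.X W.X).inv ≫ (act ▷ W.X)
  /-- coassociativity of the coaction -/
  coact_coassoc : coact ≫ (coact ▷ W.X) ≫ (α_ carrier W.X W.X).hom =
    coact ≫ (carrier ◁ W.δ) ≫ (α_ carrier A.X (W.X ⊗ W.X)).inv ≫
      (act ▷ (W.X ⊗ W.X))
  /-- counit property of the coaction -/
  coact_counit : coact ≫ (carrier ◁ W.ε) ≫ act = 𝟙 carrier

@[ext]
structure EntHom {A : Mon C} {W : Cowreath A} (M N : Ent A W) where
  hom : M.carrier ⟶ N.carrier
  linear : M.act ≫ hom = (hom ▷ A.X) ≫ N.act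
  colinear : M.coact ≫ (hom ▷ W.X) = hom ≫ N.coact

instance {A : Mon C} {W : Cowreath A} : Category (Ent A W) where
  Hom := EntHom
  id M := ⟨𝟙 M.carrier, by simp, by simp⟩
  comp f g := ⟨f.hom ≫ g.hom, by
      rw [← Category.assoc, f.linear, Category.assoc, g.linear, ← Category.assoc,
        ← MonoidalCategory.comp_whiskerRight], by
      rw [MonoidalCategory.comp_whiskerRight, ← Category.assoc, f.colinear,
        Category.assoc, g.colinear, ← Category.assoc]⟩
  id_comp f := by apply EntHom.ext; simp
  comp_id f := by apply EntHom.ext; simp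
  assoc f g h := by apply EntHom.ext; simp

@[simp] lemma Ent_id_hom {A : Mon C} {W : Cowreath A} (M : Ent A W) :
    EntHom.hom (𝟙 M) = 𝟙 M.carrier := rfl

@[simp] lemma Ent_comp_hom {A : Mon C} {W : Cowreath A} {M N K : Ent A W}
    (f : M ⟶ N) (g : N ⟶ K) : EntHom.hom (f ≫ g) = f.hom ≫ g.hom := rfl

/-- The forgetful functor from entwined modules to right `A`-modules. -/
def forgetF (A : Mon C) (W : Cowreath A) : Ent A W ⥤ RMod A where
  obj M := ⟨M.carrier, M.act, M.act_one, M.act_mul⟩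
  map f := ⟨f.hom, f.linear⟩
  map_id M := rfl
  map_comp f g := rfl

/-- A separable functor (Năstăsescu–Van den Bergh–Van Oystaeyen): the maps
`Hom(M, N) → Hom(FM, FN)` split naturally. -/
def FunctorSeparable {A B : Type*} [Category A] [Category B] (F : A ⥤ B) : Prop :=
  ∃ P : ∀ (M N : A), (F.obj M ⟶ F.obj N) → (M ⟶ N),
    (∀ (M N : A) (f : M ⟶ N), P M N (F.map f) = f) ∧
    (∀ (M M' N N' : A) (a : M' ⟶ M) (b : N ⟶ N') (f : F.obj M ⟶ F.obj N),
      P M' N' (F.map a ≫ f ≫ F.map b) = a ≫ P M N f ≫ b)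


section FunctorSeparable

variable {𝒜 ℬ : Type*} [Category 𝒜] [Category ℬ] {F : 𝒜 ⥤ ℬ}

theorem FunctorSeparable.exists_section (hF : FunctorSeparable F) {M N : 𝒜} (f : M ⟶ N)
    (h : ∃ s : F.obj N ⟶ F.obj M, s ≫ F.map f = 𝟙 (F.obj N)) : ∃ s' : N ⟶ M, s' ≫ f = 𝟙 N := by
  obtain ⟨P, hP_map, hP_nat⟩ := hF
  obtain ⟨s, hs⟩ := h
  refine ⟨P N M s, ?_⟩
  calc P N M s ≫ f = 𝟙 N ≫ P N M s ≫ f := (Category.id_comp _).symm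
    _ = P N N (F.map (𝟙 N) ≫ s ≫ F.map f) := (hP_nat N N M N (𝟙 N) f s).symm
    _ = 𝟙 N := by rw [hs, Category.comp_id, hP_map]

theorem FunctorSeparable.exists_retraction (hF : FunctorSeparable F) {M N : 𝒜} (f : M ⟶ N)
    (h : ∃ r : F.obj N ⟶ F.obj M, F.map f ≫ r = 𝟙 (F.obj M)) : ∃ r' : N ⟶ M, f ≫ r' = 𝟙 M := by
  obtain ⟨P, hP_map, hP_nat⟩ := hF
  obtain ⟨r, hr⟩ := h
  refine ⟨P N M r, ?_⟩
  calc f ≫ P N M r = f ≫ P N M r ≫ 𝟙 M := by rw [Category.comp_id]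
    _ = P M M (F.map f ≫ r ≫ F.map (𝟙 M)) := (hP_nat N M M M f (𝟙 M) r).symm
    _ = 𝟙 M := by rw [F.map_id, Category.comp_id, hr, ← F.map_id, hP_map]

end FunctorSeparable

namespace Ent

variable {A : Mon C} {W : Cowreath A} (B : W.X ⊗ W.X ⟶ A.X)

lemma coact_whiskerRight_coact (N : Ent A W) :
    N.coact ≫ (N.coact ▷ W.X) =
      N.coact ≫ (N.carrier ◁ W.δ) ≫ (α_ N.carrier A.X (W.X ⊗ W.X)).inv ≫
        (N.act ▷ (W.X ⊗ W.X)) ≫ (α_ N.carrier W.X W.X).inv := by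
  rw [← cancel_mono (α_ N.carrier W.X W.X).hom]
  simp only [Category.assoc, Iso.inv_hom_id, Category.comp_id]
  rw [← N.coact_coassoc]

lemma act_whiskerRight_act (N : Ent A W) :
    (N.act ▷ A.X) ≫ N.act =
      (α_ N.carrier A.X A.X).hom ≫ (N.carrier ◁ MonObj.mul (X := A.X)) ≫ N.act := by
  rw [← N.act_mul]
  simp

/-- `n ⊗ x ↦ n₀ · B(n₁, x)`. -/
def casimirAct (N : Ent A W) : N.carrier ⊗ W.X ⟶ N.carrier :=
  (N.coact ▷ W.X) ≫ (α_ N.carrier W.X W.X).hom ≫ (N.carrier ◁ B) ≫ N.act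

def average {M N : Ent A W} (g : M.carrier ⟶ N.carrier) : M.carrier ⟶ N.carrier :=
  M.coact ≫ (g ▷ W.X) ≫ N.casimirAct B

lemma coact_casimirAct (hnorm : W.δ ≫ (A.X ◁ B) ≫ MonObj.mul (X := A.X) = W.ε)
    (N : Ent A W) : N.coact ≫ N.casimirAct B = 𝟙 N.carrier := by
  unfold casimirAct
  slice_lhs 1 3 => rw [N.coact_coassoc]
  simp only [Category.assoc]
  rw [← whisker_exchange_assoc, ← associator_inv_naturality_right_assoc]
  slice_lhs 4 6 => rw [N.act_mul]
  slice_lhs 2 4 => rw [← whiskerLeft_comp, ← whiskerLeft_comp, hnorm]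
  exact N.coact_counit

lemma casimirAct_naturality {N N' : Ent A W} (b : N ⟶ N') :
    (b.hom ▷ W.X) ≫ N'.casimirAct B = N.casimirAct B ≫ b.hom := by
  unfold casimirAct
  slice_lhs 1 2 => rw [← comp_whiskerRight, ← b.colinear, comp_whiskerRight]
  simp only [Category.assoc]
  slice_lhs 2 3 => rw [associator_naturality_left]
  slice_lhs 3 4 => rw [← whisker_exchange]
  slice_lhs 4 5 => rw [← b.linear]

lemma average_hom (hnorm : W.δ ≫ (A.X ◁ B) ≫ MonObj.mul (X := A.X) = W.ε)
    {M N : Ent A W} (f : M ⟶ N) : average B f.hom = f.hom := by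
  rw [average, reassoc_of% f.colinear, coact_casimirAct B hnorm, Category.comp_id]

lemma average_comp {M M' N N' : Ent A W} (a : M' ⟶ M) (b : N ⟶ N')
    (g : M.carrier ⟶ N.carrier) :
    average B (a.hom ≫ g ≫ b.hom) = a.hom ≫ average B g ≫ b.hom := by
  simp only [average, comp_whiskerRight, Category.assoc, casimirAct_naturality,
    reassoc_of% a.colinear]

lemma act_comp_average {M N : Ent A W} {g : M.carrier ⟶ N.carrier}
    (hg : M.act ≫ g = (g ▷ A.X) ≫ N.act) :
    M.act ≫ average B g =
      (M.coact ▷ A.X) ≫ ((g ▷ W.X) ▷ A.X) ≫ ((N.coact ▷ W.X) ▷ A.X) ≫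
        ((α_ N.carrier W.X W.X).hom ▷ A.X) ≫ (α_ N.carrier (W.X ⊗ W.X) A.X).hom ≫
        (N.carrier ◁ (α_ W.X W.X A.X).hom) ≫
        (N.carrier ◁ ((W.X ◁ W.ψ) ≫ (α_ W.X A.X W.X).inv ≫ (W.ψ ▷ W.X) ≫
          (α_ A.X W.X W.X).hom ≫ (A.X ◁ B) ≫ MonObj.mul (X := A.X))) ≫ N.act := by
  unfold average casimirAct
  rw [reassoc_of% M.coact_linear]
  slice_lhs 5 6 => rw [← comp_whiskerRight, hg, comp_whiskerRight]
  slice_lhs 4 5 => rw [← associator_inv_naturality_left]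
  slice_lhs 3 4 => rw [whisker_exchange]
  slice_lhs 2 3 => rw [← associator_naturality_left]
  simp only [Category.assoc]
  slice_lhs 6 7 => rw [← comp_whiskerRight, N.coact_linear]
  simp only [comp_whiskerRight, Category.assoc]
  slice_lhs 5 6 => rw [← associator_inv_naturality_left]
  slice_lhs 4 5 => rw [whisker_exchange]
  slice_lhs 3 4 => rw [← associator_naturality_left]
  simp only [Category.assoc]
  slice_lhs 10 11 => rw [associator_naturality_left]
  slice_lhs 11 12 => rw [← whisker_exchange]
  slice_lhs 12 13 => rw [act_whiskerRight_act]
  monoidal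

lemma average_whiskerRight_act {M N : Ent A W} (g : M.carrier ⟶ N.carrier) :
    (average B g ▷ A.X) ≫ N.act =
      (M.coact ▷ A.X) ≫ ((g ▷ W.X) ▷ A.X) ≫ ((N.coact ▷ W.X) ▷ A.X) ≫
        ((α_ N.carrier W.X W.X).hom ▷ A.X) ≫ (α_ N.carrier (W.X ⊗ W.X) A.X).hom ≫
        (N.carrier ◁ (α_ W.X W.X A.X).hom) ≫
        (N.carrier ◁ ((α_ W.X W.X A.X).inv ≫ (B ▷ A.X) ≫ MonObj.mul (X := A.X))) ≫ N.act := by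
  simp only [average, casimirAct, comp_whiskerRight, Category.assoc]
  slice_lhs 6 7 => rw [act_whiskerRight_act]
  monoidal

lemma average_linear
    (hB : (α_ W.X W.X A.X).inv ≫ (B ▷ A.X) ≫ MonObj.mul (X := A.X) =
      (W.X ◁ W.ψ) ≫ (α_ W.X A.X W.X).inv ≫ (W.ψ ▷ W.X) ≫
        (α_ A.X W.X W.X).hom ≫ (A.X ◁ B) ≫ MonObj.mul (X := A.X))
    {M N : Ent A W} {g : M.carrier ⟶ N.carrier} (hg : M.act ≫ g = (g ▷ A.X) ≫ N.act) :
    M.act ≫ average B g = (average B g ▷ A.X) ≫ N.act := by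
  rw [act_comp_average B hg, average_whiskerRight_act, hB]

lemma casimirAct_comp_coact (N : Ent A W) :
    N.casimirAct B ≫ N.coact =
      (N.coact ▷ W.X) ≫ (α_ N.carrier W.X W.X).hom ≫
        (N.carrier ◁ ((W.δ ▷ W.X) ≫ (α_ A.X (W.X ⊗ W.X) W.X).hom ≫
          (A.X ◁ (α_ W.X W.X W.X).hom) ≫ (A.X ◁ (W.X ◁ B)) ≫ (A.X ◁ W.ψ) ≫
          (α_ A.X A.X W.X).inv ≫ (MonObj.mul (X := A.X) ▷ W.X))) ≫
        (α_ N.carrier A.X W.X).inv ≫ (N.act ▷ W.X) := by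
  simp only [casimirAct, Category.assoc]
  rw [N.coact_linear, whisker_exchange_assoc, ← associator_naturality_left_assoc,
    ← comp_whiskerRight_assoc, coact_whiskerRight_coact]
  simp only [comp_whiskerRight, Category.assoc]
  slice_lhs 4 5 => rw [← comp_whiskerRight, associator_inv_naturality_left, comp_whiskerRight]
  slice_lhs 5 6 => rw [associator_naturality_left]
  slice_lhs 6 7 => rw [← whisker_exchange]
  slice_lhs 7 8 => rw [associator_naturality_left]
  slice_lhs 8 9 => rw [← whisker_exchange]
  slice_lhs 9 10 => rw [associator_inv_naturality_left]
  slice_lhs 10 11 => rw [← comp_whiskerRight, act_whiskerRight_act]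
  monoidal

lemma coact_comp_average_whiskerRight {M N : Ent A W} {g : M.carrier ⟶ N.carrier}
    (hg : M.act ≫ g = (g ▷ A.X) ≫ N.act) :
    M.coact ≫ (average B g ▷ W.X) =
      M.coact ≫ (g ▷ W.X) ≫ (N.coact ▷ W.X) ≫ (α_ N.carrier W.X W.X).hom ≫
        (N.carrier ◁ ((W.X ◁ W.δ) ≫ (α_ W.X A.X (W.X ⊗ W.X)).inv ≫ (W.ψ ▷ (W.X ⊗ W.X)) ≫
          (α_ A.X W.X (W.X ⊗ W.X)).hom ≫ (A.X ◁ (α_ W.X W.X W.X).inv) ≫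
          (A.X ◁ (B ▷ W.X)) ≫ (α_ A.X A.X W.X).inv ≫ (MonObj.mul (X := A.X) ▷ W.X))) ≫
        (α_ N.carrier A.X W.X).inv ≫ (N.act ▷ W.X) := by
  simp only [average, casimirAct, comp_whiskerRight]
  slice_lhs 1 2 => rw [coact_whiskerRight_coact]
  simp only [Category.assoc]
  slice_lhs 5 6 => rw [← associator_inv_naturality_left]
  slice_lhs 4 5 => rw [← comp_whiskerRight, hg, comp_whiskerRight]
  slice_lhs 3 4 => rw [← associator_inv_naturality_left]
  slice_lhs 2 3 => rw [whisker_exchange]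
  simp only [Category.assoc]
  slice_lhs 5 6 => rw [associator_inv_naturality_left]
  slice_lhs 6 7 => rw [← comp_whiskerRight, ← comp_whiskerRight, N.coact_linear]
  simp only [comp_whiskerRight, Category.assoc]
  slice_lhs 5 6 => rw [← associator_inv_naturality_left]
  slice_lhs 4 5 => rw [← associator_inv_naturality_left]
  slice_lhs 3 4 => rw [whisker_exchange]
  simp only [Category.assoc]
  slice_lhs 10 11 => rw [← comp_whiskerRight, associator_naturality_left, comp_whiskerRight]
  slice_lhs 11 12 => rw [← comp_whiskerRight, ← whisker_exchange, comp_whiskerRight]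
  slice_lhs 12 13 => rw [← comp_whiskerRight, act_whiskerRight_act]
  monoidal

lemma average_colinear
    (hCas : (W.δ ▷ W.X) ≫ (α_ A.X (W.X ⊗ W.X) W.X).hom ≫
        (A.X ◁ (α_ W.X W.X W.X).hom) ≫ (A.X ◁ (W.X ◁ B)) ≫ (A.X ◁ W.ψ) ≫
        (α_ A.X A.X W.X).inv ≫ (MonObj.mul (X := A.X) ▷ W.X) =
      (W.X ◁ W.δ) ≫ (α_ W.X A.X (W.X ⊗ W.X)).inv ≫ (W.ψ ▷ (W.X ⊗ W.X)) ≫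
        (α_ A.X W.X (W.X ⊗ W.X)).hom ≫ (A.X ◁ (α_ W.X W.X W.X).inv) ≫
        (A.X ◁ (B ▷ W.X)) ≫ (α_ A.X A.X W.X).inv ≫ (MonObj.mul (X := A.X) ▷ W.X))
    {M N : Ent A W} {g : M.carrier ⟶ N.carrier} (hg : M.act ≫ g = (g ▷ A.X) ≫ N.act) :
    M.coact ≫ (average B g ▷ W.X) = average B g ≫ N.coact := by
  rw [coact_comp_average_whiskerRight B hg, average, Category.assoc, Category.assoc,
    casimirAct_comp_coact, hCas]

end Ent

/-- if `(X, ψ)` is a coseparable coalgebra in `T_A^#` (there is a Casimir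
morphism `B : X ⊗ X ⟶ A` in `T_A^#` with `m ∘ (A ⊗ B) ∘ δ = ε`), then the forgetful functor
`F : C(ψ)_A^X ⥤ C_A` is separable; consequently every morphism of entwined modules which has
a section (resp. a retraction) as a morphism of right `A`-modules already has a section
(resp. a retraction) as a morphism of entwined modules. -/
theorem stmt19 (A : Mon C) (W : Cowreath A)
    (B : W.X ⊗ W.X ⟶ A.X)
    -- `B` is a morphism `X ⊗ X → 𝟙` in `T_A^#`
    (hB : (α_ W.X W.X A.X).inv ≫ (B ▷ A.X) ≫ MonObj.mul (X := A.X) =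
      (W.X ◁ W.ψ) ≫ (α_ W.X A.X W.X).inv ≫ (W.ψ ▷ W.X) ≫
        (α_ A.X W.X W.X).hom ≫ (A.X ◁ B) ≫ MonObj.mul (X := A.X))
    -- the Casimir condition (c) with respect to `δ`
    (hCas : (W.δ ▷ W.X) ≫ (α_ A.X (W.X ⊗ W.X) W.X).hom ≫
        (A.X ◁ (α_ W.X W.X W.X).hom) ≫ (A.X ◁ (W.X ◁ B)) ≫ (A.X ◁ W.ψ) ≫
        (α_ A.X A.X W.X).inv ≫ (MonObj.mul (X := A.X) ▷ W.X) =
      (W.X ◁ W.δ) ≫ (α_ W.X A.X (W.X ⊗ W.X)).inv ≫ (W.ψ ▷ (W.X ⊗ W.X)) ≫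
        (α_ A.X W.X (W.X ⊗ W.X)).hom ≫ (A.X ◁ (α_ W.X W.X W.X).inv) ≫
        (A.X ◁ (B ▷ W.X)) ≫ (α_ A.X A.X W.X).inv ≫ (MonObj.mul (X := A.X) ▷ W.X))
    -- the normalization condition `m ∘ (A ⊗ B) ∘ δ = ε`
    (hnorm : W.δ ≫ (A.X ◁ B) ≫ MonObj.mul (X := A.X) = W.ε) :
    FunctorSeparable (forgetF A W) ∧
    (∀ (M N : Ent A W) (f : M ⟶ N),
      (∃ s : (forgetF A W).obj N ⟶ (forgetF A W).obj M,
          s ≫ (forgetF A W).map f = 𝟙 ((forgetF A W).obj N)) →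
        ∃ s' : N ⟶ M, s' ≫ f = 𝟙 N) ∧
    (∀ (M N : Ent A W) (f : M ⟶ N),
      (∃ r : (forgetF A W).obj N ⟶ (forgetF A W).obj M,
          (forgetF A W).map f ≫ r = 𝟙 ((forgetF A W).obj M)) →
        ∃ r' : N ⟶ M, f ≫ r' = 𝟙 M) := by
  have hsep : FunctorSeparable (forgetF A W) :=
    ⟨fun _ _ g => ⟨Ent.average B g.hom, Ent.average_linear B hB g.linear,
        Ent.average_colinear B hCas g.linear⟩,
      fun _ _ f => EntHom.ext (Ent.average_hom B hnorm f),
      fun _ _ _ _ a b g => EntHom.ext (Ent.average_comp B a b g.hom)⟩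
  exact ⟨hsep, fun _ _ f => hsep.exists_section f, fun _ _ f => hsep.exists_retraction f⟩
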